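/- Fix q ∈ (0,1), β ∈ [0,∞), γ ∈ (0,∞), ζ ∈ (0, (min{q,1−q})^{1/(β+1)}/γ), and τ ∈ (0, min{q,1−q} − (γζ)^{β+1}]. Let F be the CDF of a (β,γ,ζ)-clustered probability distribution on [0,∞) with finite mean satisfying F(a*−ζ) ≥ τ and F(a*+ζ) ≤ 1−τ, and let â be the SAA decision based on n IID samples from F. For any δ ∈ (0,1), if n > log(2/δ)/(2(γζ)^{2β+2}), then with probability at least 1−δ, the multiplicative regret satisfies (L(â) − L(a*))/L(a*) ≤ (1/(γζτ))·(log(2/δ)/(2n))^{(β+2)/(2β+2)}. -/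

import Mathlib

open MeasureTheory Set

noncomputable section

/-- The Newsvendor loss `ℓ(a,Z) = q·max{Z−a,0} + (1−q)·max{a−Z,0}` with critical quantile `q`. -/
def nvLoss (q a z : ℝ) : ℝ := q * max (z - a) 0 + (1 - q) * max (a - z) 0

/-- The expected Newsvendor loss `L(a)` under the demand distribution `μ`. -/
def expLoss (q : ℝ) (μ : Measure ℝ) (a : ℝ) : ℝ := ∫ z, nvLoss q a z ∂μ

/-- The CDF of the demand distribution `μ`. -/
def cdf' (μ : Measure ℝ) (z : ℝ) : ℝ := (μ (Iic z)).toReal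

/-- The optimal decision `a* = inf {a ≥ 0 : F(a) ≥ q}`. -/
def optDec (q : ℝ) (μ : Measure ℝ) : ℝ := sInf {a : ℝ | 0 ≤ a ∧ q ≤ cdf' μ a}

/-- The empirical CDF of the samples `ω : Fin n → ℝ`. -/
def empCdf (n : ℕ) (ω : Fin n → ℝ) (z : ℝ) : ℝ :=
  (∑ i : Fin n, if ω i ≤ z then (1 : ℝ) else 0) / n

/-- The SAA (sample average approximation) decision `â = inf {a ≥ 0 : F̂(a) ≥ q}`. -/
def saa (q : ℝ) (n : ℕ) (ω : Fin n → ℝ) : ℝ := sInf {a : ℝ | 0 ≤ a ∧ q ≤ empCdf n ω a}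

/-- The joint law of `n` iid samples from `μ`. -/
def iid (μ : Measure ℝ) (n : ℕ) : Measure (Fin n → ℝ) := Measure.pi fun _ => μ

/-- A distribution `μ` is `(β,γ,ζ)`-clustered if
`|a − a*| ≤ (1/γ)·|F(a) − q|^{1/(β+1)}` for all `a ∈ [a*−ζ, a*+ζ]`. -/
def Clustered (q β γ ζ : ℝ) (μ : Measure ℝ) : Prop :=
  ∀ a ∈ Icc (optDec q μ - ζ) (optDec q μ + ζ),
    |a - optDec q μ| ≤ (1 / γ) * |cdf' μ a - q| ^ ((1 : ℝ) / (β + 1))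

/-!
Put `t = √(log (2/δ) / (2n))` and `ε = t ^ (1/(β+1)) / γ`, so that `(γε)^(β+1) = t`, and the
lower bound on `n` gives `ε < ζ`. Let `c` and `e` be the `(q+t)`- and `(q-t)`-quantiles of `F`.
By Hoeffding's inequality, with probability at least `1 - δ` the empirical CDF reaches `q` at `c`
but puts mass less than `q` on `(-∞, e)`, which forces `e ≤ â ≤ c`. Clustering pins `[e, c]`
inside `[a* - ε, a* + ε]`, while `F` stays within `t` of `q` on `[e, c)`; since `L` is convex
with slope `F - q`, this gives `L(â) - L(a*) ≤ εt`. Finally `L(a*) ≥ ζτ`, because mass at least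
`τ` lies at distance at least `ζ` on each side of `a*`.
-/

open ProbabilityTheory Filter Topology

/-- `optDec q μ` and `saa q n ω` are, by definition, `nonnegQuantile (cdf' μ) q` and
`nonnegQuantile (empCdf n ω) q`. -/
def nonnegQuantile (F : ℝ → ℝ) (p : ℝ) : ℝ := sInf {a : ℝ | 0 ≤ a ∧ p ≤ F a}

section NonnegQuantile

variable {F : ℝ → ℝ} {p x : ℝ}

theorem nonnegQuantile_nonneg : 0 ≤ nonnegQuantile F p :=
  Real.sInf_nonneg fun _ h => h.1

theorem nonnegQuantile_le (hx : 0 ≤ x) (h : p ≤ F x) : nonnegQuantile F p ≤ x :=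
  csInf_le ⟨0, fun _ h => h.1⟩ ⟨hx, h⟩

theorem le_nonnegQuantile (hne : ∃ a, 0 ≤ a ∧ p ≤ F a) (h : ∀ a, 0 ≤ a → p ≤ F a → x ≤ a) :
    x ≤ nonnegQuantile F p :=
  le_csInf hne fun a ha => h a ha.1 ha.2

theorem apply_lt_of_lt_nonnegQuantile (hneg : ∀ y < 0, F y < p) (hx : x < nonnegQuantile F p) :
    F x < p := by
  by_contra! h
  rcases lt_or_ge x 0 with hx0 | hx0
  · exact (hneg x hx0).not_ge h
  · exact (nonnegQuantile_le hx0 h).not_gt hx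

theorem le_apply_of_nonnegQuantile_lt (hF : Monotone F) (hne : ∃ a, 0 ≤ a ∧ p ≤ F a)
    (hx : nonnegQuantile F p < x) : p ≤ F x := by
  obtain ⟨a, ha, hax⟩ := exists_lt_of_csInf_lt hne hx
  exact ha.2.trans (hF hax.le)

theorem le_apply_nonnegQuantile (hF : Monotone F) (hFr : ∀ y, ContinuousWithinAt F (Ici y) y)
    (hne : ∃ a, 0 ≤ a ∧ p ≤ F a) : p ≤ F (nonnegQuantile F p) :=
  ge_of_tendsto ((hFr _).mono Ioi_subset_Ici_self)
    (eventually_nhdsWithin_of_forall fun _ hy => le_apply_of_nonnegQuantile_lt hF hne hy)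

end NonnegQuantile

theorem cdf'_eq_zero_of_neg {μ : Measure ℝ} (hsupp : μ (Iio 0) = 0) {x : ℝ} (hx : x < 0) :
    cdf' μ x = 0 := by
  simp [cdf', measure_mono_null (Iic_subset_Iio.mpr hx) hsupp]

section Cdf

variable {μ : Measure ℝ} [IsProbabilityMeasure μ]

theorem cdf'_eq_cdf : cdf' μ = cdf μ :=
  funext fun x => (cdf_eq_real μ x).symm

theorem monotone_cdf' : Monotone (cdf' μ) := cdf'_eq_cdf (μ := μ) ▸ monotone_cdf μ

theorem exists_le_cdf' {p : ℝ} (hp : p < 1) : ∃ a, 0 ≤ a ∧ p ≤ cdf' μ a := by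
  obtain ⟨a, ha⟩ :=
    ((tendsto_cdf_atTop μ).eventually_const_le hp |>.and (eventually_ge_atTop 0)).exists
  exact ⟨a, ha.2, cdf'_eq_cdf (μ := μ) ▸ ha.1⟩

theorem measureReal_Iio_le {x r : ℝ} (h : ∀ y < x, cdf' μ y ≤ r) : μ.real (Iio x) ≤ r := by
  have hlim : Function.leftLim (cdf μ) x ≤ r :=
    le_of_tendsto ((monotone_cdf μ).tendsto_leftLim x)
      (eventually_nhdsWithin_of_forall fun y hy => cdf'_eq_cdf (μ := μ) ▸ h y hy)
  rw [measureReal_def, ← measure_cdf μ, (cdf μ).measure_Iio (tendsto_cdf_atBot μ), sub_zero]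
  exact max_le hlim (ENNReal.toReal_nonneg.trans (h (x - 1) (by linarith)))

theorem le_cdf'_nonnegQuantile {p : ℝ} (hne : ∃ a, 0 ≤ a ∧ p ≤ cdf' μ a) :
    p ≤ cdf' μ (nonnegQuantile (cdf' μ) p) :=
  le_apply_nonnegQuantile monotone_cdf' (cdf'_eq_cdf (μ := μ) ▸ (cdf μ).right_continuous) hne

theorem measureReal_Iio_nonnegQuantile_le {p : ℝ} (hneg : ∀ y < 0, cdf' μ y < p) :
    μ.real (Iio (nonnegQuantile (cdf' μ) p)) ≤ p :=
  measureReal_Iio_le fun _ hy => (apply_lt_of_lt_nonnegQuantile hneg hy).le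

end Cdf

section Loss

variable {q a b : ℝ}

theorem nvLoss_sub_le_of_le (hab : a ≤ b) (z : ℝ) :
    nvLoss q b z - nvLoss q a z ≤ (b - a) * ((Iio b).indicator 1 z - q) := by
  simp only [nvLoss, indicator_apply, mem_Iio, Pi.one_apply, max_def]
  split_ifs <;> grind

theorem nvLoss_sub_le_of_ge (hba : b ≤ a) (z : ℝ) :
    nvLoss q b z - nvLoss q a z ≤ (b - a) * ((Iic b).indicator 1 z - q) := by
  simp only [nvLoss, indicator_apply, mem_Iic, Pi.one_apply, max_def]
  split_ifs <;> grind

theorem mul_indicator_add_mul_indicator_le_nvLoss (hq0 : 0 ≤ q) (hq1 : q ≤ 1) {ζ : ℝ}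
    (hζ : 0 ≤ ζ) (z : ℝ) :
    ζ * (q * (Ioi (a + ζ)).indicator 1 z + (1 - q) * (Iic (a - ζ)).indicator 1 z) ≤
      nvLoss q a z := by
  simp only [nvLoss, indicator_apply, mem_Iic, mem_Ioi, Pi.one_apply, max_def]
  split_ifs <;> nlinarith

variable {μ : Measure ℝ} [IsProbabilityMeasure μ]

theorem integrable_indicator_one {s : Set ℝ} (hs : MeasurableSet s) :
    Integrable (s.indicator (1 : ℝ → ℝ)) μ :=
  (integrable_const 1).indicator hs

theorem integral_mul_indicator_one_sub {s : Set ℝ} (hs : MeasurableSet s) (c q : ℝ) :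
    ∫ z, c * (s.indicator 1 z - q) ∂μ = c * (μ.real s - q) := by
  rw [integral_const_mul, integral_sub (integrable_indicator_one hs) (integrable_const q),
    integral_indicator_one hs, integral_const, probReal_univ, one_smul]

theorem integrable_nvLoss (hmean : Integrable (fun z => z) μ) :
    Integrable (fun z => nvLoss q a z) μ :=
  (((hmean.sub (integrable_const a)).pos_part).const_mul q).add
    ((((integrable_const a).sub hmean).pos_part).const_mul (1 - q))

theorem expLoss_sub_le_of_forall_nvLoss_sub_le (hmean : Integrable (fun z => z) μ)
    {s : Set ℝ} (hs : MeasurableSet s)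
    (h : ∀ z, nvLoss q b z - nvLoss q a z ≤ (b - a) * (s.indicator 1 z - q)) :
    expLoss q μ b - expLoss q μ a ≤ (b - a) * (μ.real s - q) := by
  rw [expLoss, expLoss, ← integral_sub (integrable_nvLoss hmean) (integrable_nvLoss hmean),
    ← integral_mul_indicator_one_sub hs]
  exact integral_mono ((integrable_nvLoss hmean).sub (integrable_nvLoss hmean))
    (((integrable_indicator_one hs).sub (integrable_const q)).const_mul _) h

theorem expLoss_sub_le_of_le (hmean : Integrable (fun z => z) μ) (hab : a ≤ b) :
    expLoss q μ b - expLoss q μ a ≤ (b - a) * (μ.real (Iio b) - q) :=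
  expLoss_sub_le_of_forall_nvLoss_sub_le hmean measurableSet_Iio (nvLoss_sub_le_of_le hab)

theorem expLoss_sub_le_of_ge (hmean : Integrable (fun z => z) μ) (hba : b ≤ a) :
    expLoss q μ b - expLoss q μ a ≤ (b - a) * (cdf' μ b - q) :=
  expLoss_sub_le_of_forall_nvLoss_sub_le hmean measurableSet_Iic (nvLoss_sub_le_of_ge hba)

theorem mul_le_expLoss (hmean : Integrable (fun z => z) μ) (hq0 : 0 ≤ q) (hq1 : q ≤ 1)
    {ζ τ : ℝ} (hζ : 0 ≤ ζ) (hlo : τ ≤ cdf' μ (a - ζ)) (hhi : cdf' μ (a + ζ) ≤ 1 - τ) :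
    ζ * τ ≤ expLoss q μ a := by
  have hIoi := integrable_indicator_one (μ := μ) (measurableSet_Ioi (a := a + ζ))
  have hIic := integrable_indicator_one (μ := μ) (measurableSet_Iic (a := a - ζ))
  have htail : τ ≤ μ.real (Ioi (a + ζ)) := by
    rw [← compl_Iic, probReal_compl_eq_one_sub measurableSet_Iic]
    exact le_sub_comm.1 hhi
  calc ζ * τ ≤ ζ * (q * μ.real (Ioi (a + ζ)) + (1 - q) * cdf' μ (a - ζ)) := by
        gcongr
        nlinarith
    _ = ∫ z, ζ * (q * (Ioi (a + ζ)).indicator 1 z + (1 - q) * (Iic (a - ζ)).indicator 1 z) ∂μ := by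
        rw [integral_const_mul, integral_add (hIoi.const_mul q) (hIic.const_mul (1 - q)),
          integral_const_mul, integral_const_mul, integral_indicator_one measurableSet_Ioi,
          integral_indicator_one measurableSet_Iic]
        rfl
    _ ≤ expLoss q μ a :=
        integral_mono (((hIoi.const_mul q).add (hIic.const_mul (1 - q))).const_mul ζ)
          (integrable_nvLoss hmean) (mul_indicator_add_mul_indicator_le_nvLoss hq0 hq1 hζ)

end Loss

section OptDec

variable {q : ℝ} {μ : Measure ℝ}

theorem optDec_nonneg : 0 ≤ optDec q μ := nonnegQuantile_nonneg

theorem cdf'_lt_of_lt_optDec (hsupp : μ (Iio 0) = 0) (hq : 0 < q) {x : ℝ}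
    (hx : x < optDec q μ) : cdf' μ x < q :=
  apply_lt_of_lt_nonnegQuantile (fun _ hy => (cdf'_eq_zero_of_neg hsupp hy).trans_lt hq) hx

theorem le_cdf'_of_optDec_lt [IsProbabilityMeasure μ] (hq : q < 1) {x : ℝ}
    (hx : optDec q μ < x) : q ≤ cdf' μ x :=
  le_apply_of_nonnegQuantile_lt monotone_cdf' (exists_le_cdf' hq) hx

end OptDec

namespace Clustered

variable {q β γ ζ : ℝ} {μ : Measure ℝ}

theorem rpow_le_abs_cdf'_sub (h : Clustered q β γ ζ μ) (hβ : 0 ≤ β) (hγ : 0 < γ) {a : ℝ}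
    (ha : a ∈ Icc (optDec q μ - ζ) (optDec q μ + ζ)) :
    (γ * |a - optDec q μ|) ^ (β + 1) ≤ |cdf' μ a - q| := by
  have hle : γ * |a - optDec q μ| ≤ |cdf' μ a - q| ^ (1 / (β + 1)) := by
    rw [← le_div_iff₀' hγ, div_eq_inv_mul, ← one_div]
    exact h a ha
  calc (γ * |a - optDec q μ|) ^ (β + 1) ≤ (|cdf' μ a - q| ^ (1 / (β + 1))) ^ (β + 1) :=
        Real.rpow_le_rpow (by positivity) hle (by linarith)
    _ = |cdf' μ a - q| := by rw [one_div, Real.rpow_inv_rpow (abs_nonneg _) (by linarith)]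

theorem add_rpow_le_cdf'_optDec_add [IsProbabilityMeasure μ] (h : Clustered q β γ ζ μ)
    (hβ : 0 ≤ β) (hγ : 0 < γ) (hq : q < 1) {ε : ℝ} (hε : 0 < ε) (hεζ : ε ≤ ζ) :
    q + (γ * ε) ^ (β + 1) ≤ cdf' μ (optDec q μ + ε) := by
  have key := h.rpow_le_abs_cdf'_sub hβ hγ (a := optDec q μ + ε) ⟨by linarith, by linarith⟩
  rw [add_sub_cancel_left, abs_of_pos hε,
    abs_of_nonneg (sub_nonneg.2 (le_cdf'_of_optDec_lt hq (by linarith)))] at key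
  linarith

theorem cdf'_lt_sub_rpow [IsProbabilityMeasure μ] (h : Clustered q β γ ζ μ) (hβ : 0 ≤ β)
    (hγ : 0 < γ) (hsupp : μ (Iio 0) = 0) (hq : 0 < q) {ε : ℝ} (hε : 0 ≤ ε) (hεζ : ε < ζ)
    {x : ℝ} (hx : x < optDec q μ - ε) : cdf' μ x < q - (γ * ε) ^ (β + 1) := by
  set v := max x (optDec q μ - ζ)
  have hv : v < optDec q μ - ε := max_lt hx (by linarith)
  have key := h.rpow_le_abs_cdf'_sub hβ hγ (a := v) ⟨le_max_right _ _, by linarith⟩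
  rw [abs_sub_comm, abs_of_pos (by linarith : 0 < optDec q μ - v),
    abs_of_neg (sub_neg.2 (cdf'_lt_of_lt_optDec hsupp hq (by linarith)))] at key
  have hlt : (γ * ε) ^ (β + 1) < (γ * (optDec q μ - v)) ^ (β + 1) :=
    Real.rpow_lt_rpow (by positivity) (mul_lt_mul_of_pos_left (by linarith) hγ) (by linarith)
  linarith [monotone_cdf' (μ := μ) (le_max_left x (optDec q μ - ζ))]

theorem nonnegQuantile_add_le [IsProbabilityMeasure μ] (h : Clustered q β γ ζ μ) (hβ : 0 ≤ β)
    (hγ : 0 < γ) (hq : q < 1) {t ε : ℝ} (hε : 0 < ε) (hεζ : ε ≤ ζ)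
    (htε : t ≤ (γ * ε) ^ (β + 1)) :
    nonnegQuantile (cdf' μ) (q + t) ≤ optDec q μ + ε :=
  nonnegQuantile_le (by linarith [optDec_nonneg (q := q) (μ := μ)])
    (by linarith [h.add_rpow_le_cdf'_optDec_add hβ hγ hq hε hεζ])

theorem sub_le_nonnegQuantile_sub [IsProbabilityMeasure μ] (h : Clustered q β γ ζ μ)
    (hβ : 0 ≤ β) (hγ : 0 < γ) (hsupp : μ (Iio 0) = 0) (hq : q ∈ Ioo 0 1) {t ε : ℝ}
    (ht : 0 ≤ t) (hε : 0 < ε) (hεζ : ε < ζ) (htε : t ≤ (γ * ε) ^ (β + 1)) :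
    optDec q μ - ε ≤ nonnegQuantile (cdf' μ) (q - t) := by
  refine le_nonnegQuantile (exists_le_cdf' (by linarith [hq.2])) fun a _ ha => ?_
  by_contra! hlt
  linarith [h.cdf'_lt_sub_rpow hβ hγ hsupp hq.1 hε.le hεζ hlt]

theorem expLoss_sub_optDec_le [IsProbabilityMeasure μ] (h : Clustered q β γ ζ μ) (hβ : 0 ≤ β)
    (hγ : 0 < γ) (hsupp : μ (Iio 0) = 0) (hmean : Integrable (fun z => z) μ)
    (hq : q ∈ Ioo 0 1) {t ε : ℝ} (ht : 0 ≤ t) (htq : t < q) (hε : 0 < ε) (hεζ : ε < ζ)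
    (htε : t ≤ (γ * ε) ^ (β + 1)) {b : ℝ}
    (hb : b ∈ Icc (nonnegQuantile (cdf' μ) (q - t)) (nonnegQuantile (cdf' μ) (q + t))) :
    expLoss q μ b - expLoss q μ (optDec q μ) ≤ ε * t := by
  rcases le_total b (optDec q μ) with hba | hab
  · have hFb : q - t ≤ cdf' μ b :=
      (le_cdf'_nonnegQuantile (exists_le_cdf' (by linarith [hq.2]))).trans (monotone_cdf' hb.1)
    have hdist : optDec q μ - b ≤ ε := by
      linarith [h.sub_le_nonnegQuantile_sub hβ hγ hsupp hq ht hε hεζ htε, hb.1]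
    calc expLoss q μ b - expLoss q μ (optDec q μ) ≤ (b - optDec q μ) * (cdf' μ b - q) :=
          expLoss_sub_le_of_ge hmean hba
      _ = (optDec q μ - b) * (q - cdf' μ b) := by ring
      _ ≤ (optDec q μ - b) * t := mul_le_mul_of_nonneg_left (by linarith) (by linarith)
      _ ≤ ε * t := mul_le_mul_of_nonneg_right hdist ht
  · have hIio : μ.real (Iio b) ≤ q + t :=
      (measureReal_mono (Iio_subset_Iio hb.2)).trans <| measureReal_Iio_nonnegQuantile_le
        fun _ hy => (cdf'_eq_zero_of_neg hsupp hy).trans_lt (by linarith [hq.1])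
    have hdist : b - optDec q μ ≤ ε := by
      linarith [h.nonnegQuantile_add_le hβ hγ hq.2 hε hεζ.le htε, hb.2]
    calc expLoss q μ b - expLoss q μ (optDec q μ) ≤ (b - optDec q μ) * (μ.real (Iio b) - q) :=
          expLoss_sub_le_of_le hmean hab
      _ ≤ (b - optDec q μ) * t := mul_le_mul_of_nonneg_left (by linarith) (by linarith)
      _ ≤ ε * t := mul_le_mul_of_nonneg_right hdist ht

end Clustered

theorem empCdf_eq_sum_indicator (n : ℕ) (ω : Fin n → ℝ) (x : ℝ) :
    empCdf n ω x = (∑ i, (Iic x).indicator 1 (ω i)) / n := by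
  simp only [empCdf, indicator_apply, mem_Iic, Pi.one_apply]

theorem saa_mem_Icc {q c e : ℝ} {n : ℕ} {ω : Fin n → ℝ} (hn : 0 < n) (hc : 0 ≤ c)
    (hωc : q * n ≤ ∑ i, (Iic c).indicator 1 (ω i))
    (hωe : ∑ i, (Iio e).indicator 1 (ω i) < q * n) :
    saa q n ω ∈ Icc e c := by
  have hiff : ∀ x, q ≤ empCdf n ω x ↔ q * n ≤ ∑ i, (Iic x).indicator 1 (ω i) := fun x => by
    rw [empCdf_eq_sum_indicator, le_div_iff₀ (Nat.cast_pos.2 hn)]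
  refine ⟨le_nonnegQuantile ⟨c, hc, (hiff c).2 hωc⟩ fun x _ hx => ?_,
    nonnegQuantile_le hc ((hiff c).2 hωc)⟩
  by_contra! hxe
  have hsum : ∑ i, (Iic x).indicator (1 : ℝ → ℝ) (ω i) ≤ ∑ i, (Iio e).indicator 1 (ω i) :=
    Finset.sum_le_sum fun i _ =>
      indicator_le_indicator_of_subset (Iic_subset_Iio.2 hxe) (fun _ => zero_le_one) _
  linarith [(hiff x).1 hx]

theorem measure_pi_sum_indicator_ge_le {α ι : Type*} [MeasurableSpace α] [Fintype ι]
    (μ : Measure α) [IsProbabilityMeasure μ] {A : Set α} (hA : MeasurableSet A)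
    {t : ℝ} (ht : 0 ≤ t) :
    Measure.pi (fun _ : ι => μ)
        {ω | Fintype.card ι * (μ.real A + t) ≤ ∑ i, A.indicator 1 (ω i)} ≤
      ENNReal.ofReal (Real.exp (-(2 * Fintype.card ι * t ^ 2))) := by
  set P := Measure.pi (fun _ : ι => μ)
  have hf : Measurable (A.indicator (1 : α → ℝ)) := measurable_one.indicator hA
  have hindep : iIndepFun (fun i ω => A.indicator (1 : α → ℝ) (ω i) - μ.real A) P :=
    iIndepFun_pi (X := fun _ x => A.indicator (1 : α → ℝ) x - μ.real A)
      fun _ => (hf.sub_const _).aemeasurable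
  have hsubG : ∀ i, HasSubgaussianMGF (fun ω => A.indicator (1 : α → ℝ) (ω i) - μ.real A)
      ((‖(1 : ℝ) - 0‖₊ / 2) ^ 2) P := by
    intro i
    have h := hasSubgaussianMGF_of_mem_Icc (μ := P) (a := 0) (b := 1)
      (X := fun ω => A.indicator (1 : α → ℝ) (ω i))
      (hf.comp (measurable_pi_apply i)).aemeasurable
      (ae_of_all _ fun ω => ⟨Set.indicator_nonneg (fun _ _ => zero_le_one) _,
        Set.indicator_le_self' (fun _ _ => zero_le_one) _⟩)
    rwa [integral_comp_eval hf.aestronglyMeasurable, integral_indicator_one hA] at h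
  have h := HasSubgaussianMGF.measure_sum_ge_le_of_iIndepFun hindep (s := Finset.univ)
    (fun i _ => hsubG i) (ε := Fintype.card ι * t) (by positivity)
  rw [← ofReal_measureReal]
  refine ENNReal.ofReal_le_ofReal (le_of_eq_of_le ?_ (h.trans_eq ?_))
  · congr 1
    ext ω
    simp only [mem_ofPred_eq, Finset.sum_sub_distrib, Finset.sum_const, Finset.card_univ,
      nsmul_eq_mul]
    constructor <;> intro <;> linarith
  · rcases (Fintype.card ι).eq_zero_or_pos with hι | hι
    · simp [hι]
    congr 1
    simp only [sub_zero, nnnorm_one, one_div, inv_pow, Finset.sum_const, Finset.card_univ,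
      nsmul_eq_mul, NNReal.coe_mul, NNReal.coe_natCast, NNReal.coe_inv, NNReal.coe_pow,
      NNReal.coe_ofNat]
    field_simp

instance isProbabilityMeasure_iid (μ : Measure ℝ) [IsProbabilityMeasure μ] (n : ℕ) :
    IsProbabilityMeasure (iid μ n) := by
  unfold iid
  infer_instance

theorem iid_mul_le_sum_indicator_le (μ : Measure ℝ) [IsProbabilityMeasure μ] (n : ℕ) {A : Set ℝ}
    (hA : MeasurableSet A) {p t : ℝ} (ht : 0 ≤ t) (hp : μ.real A + t ≤ p) :
    iid μ n {ω | p * n ≤ ∑ i, A.indicator 1 (ω i)} ≤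
      ENNReal.ofReal (Real.exp (-(2 * n * t ^ 2))) := by
  have h := measure_pi_sum_indicator_ge_le (ι := Fin n) μ hA ht
  rw [Fintype.card_fin] at h
  refine (measure_mono fun ω hω => ?_).trans h
  simp only [mem_ofPred_eq] at hω ⊢
  nlinarith [(Nat.cast_nonneg n : (0 : ℝ) ≤ n)]

theorem iid_sum_indicator_lt_mul_le (μ : Measure ℝ) [IsProbabilityMeasure μ] (n : ℕ) {A : Set ℝ}
    (hA : MeasurableSet A) {p t : ℝ} (ht : 0 ≤ t) (hp : p + t ≤ μ.real A) :
    iid μ n {ω | ∑ i, A.indicator 1 (ω i) < p * n} ≤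
      ENNReal.ofReal (Real.exp (-(2 * n * t ^ 2))) := by
  refine (measure_mono fun ω hω => ?_).trans (iid_mul_le_sum_indicator_le μ n hA.compl ht
    (p := 1 - p) (by rw [probReal_compl_eq_one_sub hA]; linarith))
  simp only [mem_ofPred_eq, indicator_compl, Pi.sub_apply, Finset.sum_sub_distrib, Pi.one_apply,
    Finset.sum_const, Finset.card_univ, Fintype.card_fin, nsmul_eq_mul, mul_one] at hω ⊢
  linarith

theorem ofReal_one_sub_le_measure {Ω : Type*} [MeasurableSpace Ω] {P : Measure Ω}
    [IsProbabilityMeasure P] {s : Set Ω} {r : ℝ} (hr : 0 ≤ r) (h : P sᶜ ≤ ENNReal.ofReal r) :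
    ENNReal.ofReal (1 - r) ≤ P s := by
  rw [ENNReal.ofReal_sub _ hr, ENNReal.ofReal_one, tsub_le_iff_right]
  calc 1 = P univ := measure_univ.symm
    _ ≤ P s + P sᶜ := measure_univ_le_add_compl s
    _ ≤ P s + ENNReal.ofReal r := add_le_add_right h _

theorem Clustered.iid_expLoss_saa_sub_le {q β γ ζ t ε : ℝ} {μ : Measure ℝ}
    [IsProbabilityMeasure μ] (h : Clustered q β γ ζ μ) (hβ : 0 ≤ β) (hγ : 0 < γ)
    (hsupp : μ (Iio 0) = 0) (hmean : Integrable (fun z => z) μ) (hq : q ∈ Ioo 0 1)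
    (ht : 0 ≤ t) (htq : t < q) (hε : 0 < ε) (hεζ : ε < ζ) (htε : t ≤ (γ * ε) ^ (β + 1))
    {n : ℕ} (hn : 0 < n) :
    ENNReal.ofReal (1 - 2 * Real.exp (-(2 * n * t ^ 2))) ≤
      iid μ n {ω | expLoss q μ (saa q n ω) - expLoss q μ (optDec q μ) ≤ ε * t} := by
  set c := nonnegQuantile (cdf' μ) (q + t)
  set e := nonnegQuantile (cdf' μ) (q - t)
  have hc : q + t ≤ cdf' μ c := le_cdf'_nonnegQuantile
    ⟨optDec q μ + ε, by linarith [optDec_nonneg (q := q) (μ := μ)],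
      by linarith [h.add_rpow_le_cdf'_optDec_add hβ hγ hq.2 hε hεζ.le]⟩
  have he : μ.real (Iio e) ≤ q - t := measureReal_Iio_nonnegQuantile_le
    fun _ hy => (cdf'_eq_zero_of_neg hsupp hy).trans_lt (by linarith)
  have hbad : {ω | expLoss q μ (saa q n ω) - expLoss q μ (optDec q μ) ≤ ε * t}ᶜ ⊆
      {ω | ∑ i, (Iic c).indicator 1 (ω i) < q * n} ∪
        {ω | q * n ≤ ∑ i, (Iio e).indicator 1 (ω i)} := by
    intro ω hω
    by_contra hgood
    simp only [mem_union, mem_ofPred_eq, not_or, not_lt, not_le] at hgood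
    exact hω (h.expLoss_sub_optDec_le hβ hγ hsupp hmean hq ht htq hε hεζ htε
      (saa_mem_Icc hn nonnegQuantile_nonneg hgood.1 hgood.2))
  refine ofReal_one_sub_le_measure (by positivity)
    ((measure_mono hbad).trans ((measure_union_le _ _).trans ?_))
  rw [two_mul, ENNReal.ofReal_add (by positivity) (by positivity)]
  exact add_le_add (iid_sum_indicator_lt_mul_le μ n measurableSet_Iic ht hc)
    (iid_mul_le_sum_indicator_le μ n measurableSet_Iio ht (by linarith))

def hoeffdingRadius (n : ℕ) (δ : ℝ) : ℝ := Real.sqrt (Real.log (2 / δ) / (2 * n))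

section HoeffdingRadius

variable {n : ℕ} {δ : ℝ}

theorem pos_of_log_two_div_div_lt (hδ : 0 < δ) (hδ2 : δ ≤ 2) {s : ℝ} (hs : 0 ≤ s)
    (h : Real.log (2 / δ) / s < n) : 0 < n := by
  have hlog : 0 ≤ Real.log (2 / δ) := Real.log_nonneg (by rw [le_div_iff₀ hδ]; linarith)
  exact_mod_cast (div_nonneg hlog hs).trans_lt h

theorem sq_hoeffdingRadius (hδ : 0 < δ) (hδ2 : δ ≤ 2) :
    hoeffdingRadius n δ ^ 2 = Real.log (2 / δ) / (2 * n) :=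
  Real.sq_sqrt (div_nonneg (Real.log_nonneg (by rw [le_div_iff₀ hδ]; linarith)) (by positivity))

theorem hoeffdingRadius_pos (hn : 0 < n) (hδ : 0 < δ) (hδ2 : δ < 2) : 0 < hoeffdingRadius n δ :=
  Real.sqrt_pos.2 (div_pos (Real.log_pos (by rw [lt_div_iff₀ hδ]; linarith)) (by positivity))

theorem two_mul_exp_neg_hoeffdingRadius (hn : 0 < n) (hδ : 0 < δ) (hδ2 : δ ≤ 2) :
    2 * Real.exp (-(2 * n * hoeffdingRadius n δ ^ 2)) = δ := by
  rw [sq_hoeffdingRadius hδ hδ2, show -(2 * (n : ℝ) * (Real.log (2 / δ) / (2 * n))) =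
    -Real.log (2 / δ) by field_simp, Real.exp_neg, Real.exp_log (by positivity)]
  field_simp

theorem hoeffdingRadius_lt (hn : 0 < n) {s : ℝ} (hs : 0 < s)
    (h : Real.log (2 / δ) / (2 * s ^ 2) < n) : hoeffdingRadius n δ < s := by
  rw [hoeffdingRadius, Real.sqrt_lt' hs, div_lt_iff₀ (by positivity)]
  rw [div_lt_iff₀ (by positivity)] at h
  linarith

end HoeffdingRadius

def clusterRadius (β γ t : ℝ) : ℝ := t ^ (1 / (β + 1)) / γ

section ClusterRadius

variable {β γ t : ℝ}

theorem clusterRadius_pos (hγ : 0 < γ) (ht : 0 < t) : 0 < clusterRadius β γ t :=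
  div_pos (Real.rpow_pos_of_pos ht _) hγ

theorem mul_clusterRadius_rpow (hβ : 0 ≤ β) (hγ : 0 < γ) (ht : 0 ≤ t) :
    (γ * clusterRadius β γ t) ^ (β + 1) = t := by
  rw [clusterRadius, mul_div_cancel₀ _ hγ.ne', one_div, Real.rpow_inv_rpow ht (by linarith)]

theorem clusterRadius_lt (hβ : 0 ≤ β) (hγ : 0 < γ) (ht : 0 < t) {ζ : ℝ} (hζ : 0 < ζ)
    (h : t < (γ * ζ) ^ (β + 1)) : clusterRadius β γ t < ζ := by
  refine lt_of_mul_lt_mul_left ?_ hγ.le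
  rwa [← Real.rpow_lt_rpow_iff (mul_pos hγ (clusterRadius_pos hγ ht)).le (mul_pos hγ hζ).le
    (by linarith : (0 : ℝ) < β + 1), mul_clusterRadius_rpow hβ hγ ht.le]

theorem clusterRadius_mul_self (hβ : 0 ≤ β) (ht : 0 < t) :
    clusterRadius β γ t * t = (t ^ 2) ^ ((β + 2) / (2 * β + 2)) / γ := by
  have hexp : ((2 : ℕ) : ℝ) * ((β + 2) / (2 * β + 2)) = 1 / (β + 1) + 1 := by
    push_cast
    field_simp
    ring
  rw [clusterRadius, ← Real.rpow_natCast, ← Real.rpow_mul ht.le, hexp, Real.rpow_add_one ht.ne']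
  ring

end ClusterRadius

/-- High-probability multiplicative regret upper bound for SAA on
`(β,γ,ζ)`-clustered distributions with `F(a*−ζ) ≥ τ` and `F(a*+ζ) ≤ 1−τ`:
if `n > log(2/δ)/(2(γζ)^{2β+2})`, then with probability at least `1−δ`,
`(L(â) − L(a*))/L(a*) ≤ (1/(γζτ))·(log(2/δ)/(2n))^{(β+2)/(2β+2)}`. -/
theorem saa_high_prob_multiplicative_regret_clustered
    (q β γ ζ τ : ℝ) (hq : q ∈ Ioo (0:ℝ) 1) (hβ : 0 ≤ β) (hγ : 0 < γ)
    (hζ : ζ ∈ Ioo 0 ((min q (1 - q)) ^ ((1:ℝ)/(β+1)) / γ))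
    (hτ : τ ∈ Ioc 0 (min q (1 - q) - (γ*ζ) ^ (β+1)))
    (μ : Measure ℝ) [IsProbabilityMeasure μ] (hsupp : μ (Iio 0) = 0)
    (hmean : Integrable (fun z => z) μ)
    (hclus : Clustered q β γ ζ μ)
    (hlo : τ ≤ cdf' μ (optDec q μ - ζ)) (hhi : cdf' μ (optDec q μ + ζ) ≤ 1 - τ)
    (n : ℕ) (δ : ℝ) (hδ : δ ∈ Ioo (0:ℝ) 1)
    (hn : Real.log (2/δ) / (2 * (γ*ζ) ^ (2*β+2)) < n) :
    ENNReal.ofReal (1 - δ) ≤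
      (iid μ n) {ω |
        (expLoss q μ (saa q n ω) - expLoss q μ (optDec q μ)) / expLoss q μ (optDec q μ)
          ≤ (1/(γ*ζ*τ)) * (Real.log (2/δ) / (2*n)) ^ ((β+2)/(2*β+2))} := by
  have hγζ : 0 < γ * ζ := mul_pos hγ hζ.1
  have hδ2 : δ < 2 := by linarith [hδ.2]
  have hn0 : 0 < n := pos_of_log_two_div_div_lt hδ.1 hδ2.le
    (mul_nonneg zero_le_two (Real.rpow_nonneg hγζ.le _)) hn
  set t := hoeffdingRadius n δ
  have ht : 0 < t := hoeffdingRadius_pos hn0 hδ.1 hδ2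
  have htζ : t < (γ * ζ) ^ (β + 1) := by
    refine hoeffdingRadius_lt hn0 (Real.rpow_pos_of_pos hγζ _) ?_
    rwa [← Real.rpow_mul_natCast hγζ.le, show (β + 1) * ((2 : ℕ) : ℝ) = 2 * β + 2 by
      push_cast; ring]
  set ε := clusterRadius β γ t
  have hε : 0 < ε := clusterRadius_pos hγ ht
  have htq : t < q := by linarith [min_le_left q (1 - q), hτ.1, hτ.2]
  have hL : ζ * τ ≤ expLoss q μ (optDec q μ) :=
    mul_le_expLoss hmean hq.1.le hq.2.le hζ.1.le hlo hhi
  have hbound := hclus.iid_expLoss_saa_sub_le hβ hγ hsupp hmean hq ht.le htq hε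
    (clusterRadius_lt hβ hγ ht hζ.1 htζ) (mul_clusterRadius_rpow hβ hγ ht.le).ge hn0
  rw [two_mul_exp_neg_hoeffdingRadius hn0 hδ.1 hδ2.le] at hbound
  refine hbound.trans (measure_mono fun ω hω => ?_)
  calc _ ≤ ε * t / (ζ * τ) := div_le_div₀ (mul_pos hε ht).le hω (mul_pos hζ.1 hτ.1) hL
    _ = _ := by
      rw [clusterRadius_mul_self hβ ht, sq_hoeffdingRadius hδ.1 hδ2.le]
      field_simp
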